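/- arXiv:1111.6143 — 3 statements merged into one kernel-verified Lean document; each statement's English description precedes it below -/
import Mathlib

section
/- Let a > 0 and 0 < b ≤ (√a/I₁(√a))·√(2I₀(√a)-1)/(I₀(√a)-1). Then any solution h of -(1/r)(r h')' + a h = b/√(1+h'²) with h'(0)=0, h(1)=0 satisfies |h'(r)| ≤ √(2I₀(√a)-1)/(I₀(√a)-1) for all r ∈ [0,1]. -/
/-!
Writing `g` for the derivative of `h`, the equation says `(r g)' = r F` with
`F = a h - b P(g)`. A maximum principle for this radial operator (at a maximum of `h` away
from `r = 1` the flux `r g` vanishes, so `F > 0` there would push `h` upwards) gives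
`0 ≤ a h ≤ b`, hence `|F| ≤ b` because `0 < P ≤ 1`. Integrating the flux from `0` gives
`|r g(r)| ≤ b r² / 2`, so `|h'| ≤ b / 2`, and `b / 2` is below the claimed bound because
`I₁(x) ≥ x / 2`.
-/

open Real MeasureTheory Set Filter Topology

/-- Modified Bessel function of the first kind, order 0. -/
noncomputable def besselI0 (z : ℝ) : ℝ :=
  ∑' k : ℕ, (z / 2) ^ (2 * k) / ((Nat.factorial k : ℝ) * Nat.factorial k)

/-- Modified Bessel function of the first kind, order 1. -/
noncomputable def besselI1 (z : ℝ) : ℝ :=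
  ∑' k : ℕ, (z / 2) ^ (2 * k + 1) / ((Nat.factorial k : ℝ) * Nat.factorial (k + 1))

/-- Modified Bessel function of the first kind, order 2. -/
noncomputable def besselI2 (z : ℝ) : ℝ :=
  ∑' k : ℕ, (z / 2) ^ (2 * k + 2) / ((Nat.factorial k : ℝ) * Nat.factorial (k + 2))

/-- Modified Bessel function of the second kind, order 0 (integral representation). -/
noncomputable def besselK0 (z : ℝ) : ℝ :=
  ∫ t in Set.Ioi (0 : ℝ), Real.exp (-z * Real.cosh t)

/-- Modified Bessel function of the second kind, order 1 (integral representation). -/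
noncomputable def besselK1 (z : ℝ) : ℝ :=
  ∫ t in Set.Ioi (0 : ℝ), Real.exp (-z * Real.cosh t) * Real.cosh t

noncomputable def Pfun (x : ℝ) : ℝ := 1 / Real.sqrt (1 + x ^ 2)

noncomputable def v0 (a r : ℝ) : ℝ := besselI0 (Real.sqrt a * r)

noncomputable def v1 (a r : ℝ) : ℝ :=
  besselI0 (Real.sqrt a) * besselK0 (Real.sqrt a * r)
    - besselI0 (Real.sqrt a * r) * besselK0 (Real.sqrt a)

noncomputable def Fker (a b r t : ℝ) : ℝ :=
  (b / besselI0 (Real.sqrt a)) *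
    ((if t ∈ Set.Icc r 1 then t * v0 a r * v1 a t else 0)
      + (if t ∈ Set.Icc 0 r then t * v0 a t * v1 a r else 0))

/-- Picard iterates: `h₀(r) = (b/a)(1 - I₀(√a r)/I₀(√a))`,
`hₙ(r) = ∫₀¹ F(r,t) P(h'_{n-1}(t)) dt`. -/
noncomputable def picard (a b : ℝ) : ℕ → ℝ → ℝ
  | 0 => fun r => (b / a) * (1 - besselI0 (Real.sqrt a * r) / besselI0 (Real.sqrt a))
  | n + 1 => fun r => ∫ t in (0 : ℝ)..1, Fker a b r t * Pfun (deriv (picard a b n) t)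

/-- `h` solves the corneal boundary value problem
`-(1/r)(r h')' + a h = b/√(1 + h'²)` on `(0,1)`, `h'(0) = 0`, `h(1) = 0`. -/
def SolvesBVP (a b : ℝ) (h : ℝ → ℝ) : Prop :=
  ContDiffOn ℝ 2 h (Set.Icc 0 1) ∧
  (∀ r ∈ Set.Ioo (0 : ℝ) 1,
    -(1 / r) * deriv (fun s : ℝ => s * deriv h s) r + a * h r
      = b / Real.sqrt (1 + (deriv h r) ^ 2)) ∧
  deriv h 0 = 0 ∧ h 1 = 0

lemma summable_pow_div_factorial_mul_factorial {y : ℝ} (hy : 0 ≤ y) (m : ℕ) :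
    Summable (fun k : ℕ => y ^ k / ((k.factorial : ℝ) * (k + m).factorial)) := by
  refine (Real.summable_pow_div_factorial y).of_nonneg_of_le (fun k => by positivity) fun k => ?_
  have hm : (1 : ℝ) ≤ (k + m).factorial := mod_cast Nat.factorial_pos _
  gcongr
  exact le_mul_of_one_le_right (by positivity) hm

lemma one_le_besselI0 (x : ℝ) : 1 ≤ besselI0 x := by
  have hs : Summable (fun k : ℕ => (x / 2) ^ (2 * k) / ((k.factorial : ℝ) * k.factorial)) := by
    simpa only [pow_mul, add_zero] using
      summable_pow_div_factorial_mul_factorial (sq_nonneg (x / 2)) 0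
  simpa [besselI0] using hs.le_tsum 0 fun k _ => by rw [pow_mul]; positivity

lemma half_le_besselI1 {x : ℝ} (hx : 0 ≤ x) : x / 2 ≤ besselI1 x := by
  have hs : Summable
      (fun k : ℕ => (x / 2) ^ (2 * k + 1) / ((k.factorial : ℝ) * (k + 1).factorial)) := by
    simpa only [pow_succ, pow_mul, mul_div_right_comm] using
      (summable_pow_div_factorial_mul_factorial (sq_nonneg (x / 2)) 1).mul_right (x / 2)
  simpa [besselI1] using hs.le_tsum 0 fun k _ => by positivity

lemma div_besselI1_le_two {x : ℝ} (hx : 0 ≤ x) : x / besselI1 x ≤ 2 := by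
  rcases hx.eq_or_lt with rfl | hx
  · simp
  have hI1 := half_le_besselI1 hx.le
  rw [div_le_iff₀ (by linarith)]
  linarith

lemma Pfun_pos (x : ℝ) : 0 < Pfun x := by
  unfold Pfun
  positivity

lemma Pfun_le_one (x : ℝ) : Pfun x ≤ 1 := by
  unfold Pfun
  rw [div_le_one (by positivity), Real.one_le_sqrt]
  nlinarith [sq_nonneg x]

lemma continuous_Pfun : Continuous Pfun :=
  continuous_const.div (by fun_prop) fun x => (Real.sqrt_pos.2 (by positivity)).ne'

lemma abs_sub_le_sub_of_abs_hasDerivAt_le {φ φ' ψ ψ' : ℝ → ℝ} {x y : ℝ} (hxy : x ≤ y)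
    (hφ : ContinuousOn φ (Icc x y)) (hψ : ContinuousOn ψ (Icc x y))
    (hφ' : ∀ t ∈ Ioo x y, HasDerivAt φ (φ' t) t) (hψ' : ∀ t ∈ Ioo x y, HasDerivAt ψ (ψ' t) t)
    (hle : ∀ t ∈ Ioo x y, |φ' t| ≤ ψ' t) :
    |φ y - φ x| ≤ ψ y - ψ x := by
  have hx : x ∈ Icc x y := left_mem_Icc.2 hxy
  have hy : y ∈ Icc x y := right_mem_Icc.2 hxy
  have hsub := monotoneOn_of_hasDerivWithinAt_nonneg (convex_Icc x y) (hψ.sub hφ)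
    (fun t ht => by rw [interior_Icc] at ht ⊢; exact ((hψ' t ht).sub (hφ' t ht)).hasDerivWithinAt)
    (fun t ht => by rw [interior_Icc] at ht; linarith [(abs_le.1 (hle t ht)).2])
  have hadd := monotoneOn_of_hasDerivWithinAt_nonneg (convex_Icc x y) (hψ.add hφ)
    (fun t ht => by rw [interior_Icc] at ht ⊢; exact ((hψ' t ht).add (hφ' t ht)).hasDerivWithinAt)
    (fun t ht => by rw [interior_Icc] at ht; linarith [(abs_le.1 (hle t ht)).1])
  have h₁ := hsub hx hy hxy
  have h₂ := hadd hx hy hxy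
  simp only [Pi.sub_apply, Pi.add_apply] at h₁ h₂
  exact abs_le.2 ⟨by linarith, by linarith⟩

section RadialFlux

variable {h g F : ℝ → ℝ}

lemma nonpos_of_isMaxOn_of_hasDerivAt_flux (hh : ContinuousOn h (Icc 0 1))
    (hg : ContinuousOn g (Icc 0 1)) (hF : ContinuousOn F (Icc 0 1))
    (hhg : ∀ t ∈ Ioo 0 1, HasDerivAt h (g t) t)
    (hflux : ∀ t ∈ Ioo 0 1, HasDerivAt (fun s => s * g s) (t * F t) t)
    {r₀ : ℝ} (hr₀ : r₀ ∈ Ico 0 1) (hmax : IsMaxOn h (Icc 0 1) r₀) : F r₀ ≤ 0 := by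
  by_contra! hpos
  have hnhds : Icc (0 : ℝ) 1 ∈ 𝓝[≥] r₀ := Icc_mem_nhdsGE_of_mem hr₀
  obtain ⟨u, hu, hFu⟩ := (mem_nhdsGE_iff_exists_Ico_subset).1
    ((nhdsWithin_le_of_mem hnhds) ((hF r₀ (Ico_subset_Icc_self hr₀)).eventually
      (lt_mem_nhds hpos)))
  set c := min u 1
  have hr₀c : r₀ < c := lt_min hu hr₀.2
  have hIcc : Icc r₀ c ⊆ Icc 0 1 := Icc_subset_Icc hr₀.1 (min_le_right _ _)
  have hIoo : ∀ t ∈ Ioo r₀ c, t ∈ Ioo 0 1 := fun t ht =>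
    ⟨hr₀.1.trans_lt ht.1, ht.2.trans_le (min_le_right _ _)⟩
  have hflux₀ : r₀ * g r₀ = 0 := by
    rcases hr₀.1.eq_or_lt with rfl | h0
    · exact zero_mul _
    · rw [(hmax.isLocalMax (Icc_mem_nhds h0 hr₀.2)).hasDerivAt_eq_zero (hhg r₀ ⟨h0, hr₀.2⟩),
        mul_zero]
  have hflux_mono : StrictMonoOn (fun s => s * g s) (Icc r₀ c) :=
    strictMonoOn_of_hasDerivWithinAt_pos (convex_Icc _ _) ((continuousOn_id.mul hg).mono hIcc)
      (fun t ht => by rw [interior_Icc] at ht ⊢; exact (hflux t (hIoo t ht)).hasDerivWithinAt)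
      (fun t ht => by
        rw [interior_Icc] at ht
        exact mul_pos (hIoo t ht).1 (hFu ⟨ht.1.le, ht.2.trans_le (min_le_left _ _)⟩))
  have hg_pos : ∀ t ∈ Ioo r₀ c, 0 < g t := fun t ht => by
    have : r₀ * g r₀ < t * g t := hflux_mono (left_mem_Icc.2 hr₀c.le) (Ioo_subset_Icc_self ht) ht.1
    rw [hflux₀] at this
    exact pos_of_mul_pos_right this (hIoo t ht).1.le
  have hh_mono : StrictMonoOn h (Icc r₀ c) :=
    strictMonoOn_of_hasDerivWithinAt_pos (convex_Icc _ _) (hh.mono hIcc)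
      (fun t ht => by rw [interior_Icc] at ht ⊢; exact (hhg t (hIoo t ht)).hasDerivWithinAt)
      (fun t ht => by rw [interior_Icc] at ht; exact hg_pos t ht)
  exact (hh_mono (left_mem_Icc.2 hr₀c.le) (right_mem_Icc.2 hr₀c.le) hr₀c).not_ge
    (hmax (hIcc (right_mem_Icc.2 hr₀c.le)))

lemma nonneg_of_isMinOn_of_hasDerivAt_flux (hh : ContinuousOn h (Icc 0 1))
    (hg : ContinuousOn g (Icc 0 1)) (hF : ContinuousOn F (Icc 0 1))
    (hhg : ∀ t ∈ Ioo 0 1, HasDerivAt h (g t) t)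
    (hflux : ∀ t ∈ Ioo 0 1, HasDerivAt (fun s => s * g s) (t * F t) t)
    {r₀ : ℝ} (hr₀ : r₀ ∈ Ico 0 1) (hmin : IsMinOn h (Icc 0 1) r₀) : 0 ≤ F r₀ := by
  have := nonpos_of_isMaxOn_of_hasDerivAt_flux (h := -h) (g := -g) (F := -F) hh.neg hg.neg hF.neg
    (fun t ht => (hhg t ht).neg)
    (fun t ht => by simpa only [Pi.neg_apply, mul_neg] using (hflux t ht).fun_neg) hr₀ hmin.neg
  simpa using this

lemma abs_le_mul_of_abs_le_of_hasDerivAt_flux (hg : ContinuousOn g (Icc 0 1))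
    (hflux : ∀ t ∈ Ioo 0 1, HasDerivAt (fun s => s * g s) (t * F t) t)
    {B : ℝ} (hFB : ∀ t ∈ Ioo 0 1, |F t| ≤ B) {x : ℝ} (hx : x ∈ Ioc 0 1) :
    |g x| ≤ B * x / 2 := by
  have hB' : ∀ t : ℝ, HasDerivAt (fun s => B * s ^ 2 / 2) (B * t) t := fun t =>
    (((hasDerivAt_pow 2 t).const_mul B).div_const 2).congr_deriv (by ring)
  have key := abs_sub_le_sub_of_abs_hasDerivAt_le (φ := fun s => s * g s) hx.1.le
    ((continuousOn_id.mul hg).mono (Icc_subset_Icc le_rfl hx.2)) (by fun_prop)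
    (fun t ht => hflux t ⟨ht.1, ht.2.trans_le hx.2⟩) (fun t _ => hB' t)
    (fun t ht => by
      rw [abs_mul, abs_of_pos ht.1, mul_comm B]
      exact mul_le_mul_of_nonneg_left (hFB t ⟨ht.1, ht.2.trans_le hx.2⟩) ht.1.le)
  norm_num [abs_mul, abs_of_pos hx.1] at key
  nlinarith [hx.1]

end RadialFlux

lemma abs_deriv_le_of_abs_derivWithin_le {f : ℝ → ℝ} {s : Set ℝ} {x M : ℝ}
    (hs : UniqueDiffWithinAt ℝ s x) (hM : 0 ≤ M) (hf : |derivWithin f s x| ≤ M) :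
    |deriv f x| ≤ M := by
  by_cases hd : DifferentiableAt ℝ f x
  · rwa [← hd.derivWithin hs]
  · rwa [deriv_zero_of_not_differentiableAt hd, abs_zero]

section SolvesBVP

variable {a b : ℝ} {h : ℝ → ℝ}

lemma SolvesBVP.hasDerivAt_derivWithin (hsol : SolvesBVP a b h) :
    ∀ t ∈ Ioo (0 : ℝ) 1, HasDerivAt h (derivWithin h (Icc 0 1) t) t := fun t ht => by
  have hd : DifferentiableAt ℝ h t :=
    (hsol.1.contDiffAt (Icc_mem_nhds ht.1 ht.2)).differentiableAt (by norm_num)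
  rw [hd.derivWithin (uniqueDiffOn_Icc one_pos t (Ioo_subset_Icc_self ht))]
  exact hd.hasDerivAt

lemma SolvesBVP.hasDerivAt_flux (hsol : SolvesBVP a b h) :
    ∀ t ∈ Ioo (0 : ℝ) 1, HasDerivAt (fun s => s * derivWithin h (Icc 0 1) s)
      (t * (a * h t - b * Pfun (derivWithin h (Icc 0 1) t))) t := fun t ht => by
  have hC1 : ContDiffOn ℝ 1 (deriv h) (Ioo 0 1) :=
    (hsol.1.mono Ioo_subset_Icc_self).deriv_of_isOpen isOpen_Ioo (by norm_num)
  have hd' : DifferentiableAt ℝ (deriv h) t :=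
    (hC1.differentiableOn (by norm_num)).differentiableAt (isOpen_Ioo.mem_nhds ht)
  have heq : (fun s => s * derivWithin h (Icc 0 1) s) =ᶠ[𝓝 t] fun s => s * deriv h s := by
    filter_upwards [isOpen_Ioo.mem_nhds ht] with s hs
    rw [(hsol.hasDerivAt_derivWithin s hs).deriv]
  rw [← (hsol.hasDerivAt_derivWithin t ht).deriv]
  have hψ : DifferentiableAt ℝ (fun s => s * deriv h s) t := by fun_prop
  refine (hψ.hasDerivAt.congr_deriv ?_).congr_of_eventuallyEq heq
  have hode := hsol.2.1 t ht
  have ht0 : t ≠ 0 := ht.1.ne'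
  rw [Pfun, mul_one_div, ← hode]
  field_simp
  ring

lemma SolvesBVP.abs_forcing_le (ha : 0 < a) (hb : 0 ≤ b) (hsol : SolvesBVP a b h) :
    ∀ t ∈ Icc (0 : ℝ) 1, |a * h t - b * Pfun (derivWithin h (Icc 0 1) t)| ≤ b := by
  set g := derivWithin h (Icc 0 1)
  have hh : ContinuousOn h (Icc 0 1) := hsol.1.continuousOn
  have hg : ContinuousOn g (Icc 0 1) :=
    hsol.1.continuousOn_derivWithin (uniqueDiffOn_Icc one_pos) (by norm_num)
  have hF : ContinuousOn (fun t => a * h t - b * Pfun (g t)) (Icc 0 1) :=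
    (continuousOn_const.mul hh).sub
      (continuousOn_const.mul (continuous_Pfun.comp_continuousOn hg))
  obtain ⟨r₀, hr₀, hmax⟩ := isCompact_Icc.exists_isMaxOn (nonempty_Icc.2 zero_le_one) hh
  obtain ⟨r₁, hr₁, hmin⟩ := isCompact_Icc.exists_isMinOn (nonempty_Icc.2 zero_le_one) hh
  have hupper : a * h r₀ ≤ b := by
    rcases hr₀.2.lt_or_eq with hr₀1 | rfl
    · have := nonpos_of_isMaxOn_of_hasDerivAt_flux hh hg hF hsol.hasDerivAt_derivWithin
        hsol.hasDerivAt_flux ⟨hr₀.1, hr₀1⟩ hmax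
      linarith [mul_le_of_le_one_right hb (Pfun_le_one (g r₀))]
    · rwa [hsol.2.2.2, mul_zero]
  have hlower : 0 ≤ h r₁ := by
    rcases hr₁.2.lt_or_eq with hr₁1 | rfl
    · have := nonneg_of_isMinOn_of_hasDerivAt_flux hh hg hF hsol.hasDerivAt_derivWithin
        hsol.hasDerivAt_flux ⟨hr₁.1, hr₁1⟩ hmin
      refine (mul_nonneg_iff_of_pos_left ha).1 ?_
      linarith [mul_nonneg hb (Pfun_pos (g r₁)).le]
    · exact hsol.2.2.2.ge
  intro t ht
  have h_le : a * h t ≤ b := (mul_le_mul_of_nonneg_left (hmax ht) ha.le).trans hupper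
  have h_nonneg : 0 ≤ a * h t := mul_nonneg ha.le (hlower.trans (hmin ht))
  have hP_le : b * Pfun (g t) ≤ b := mul_le_of_le_one_right hb (Pfun_le_one _)
  have hP_nonneg : 0 ≤ b * Pfun (g t) := mul_nonneg hb (Pfun_pos _).le
  exact abs_le.2 ⟨by linarith, by linarith⟩

end SolvesBVP

theorem solution_deriv_bound (a b : ℝ) (ha : 0 < a) (hb0 : 0 < b)
    (hb : b ≤ (Real.sqrt a / besselI1 (Real.sqrt a))
      * Real.sqrt (2 * besselI0 (Real.sqrt a) - 1) / (besselI0 (Real.sqrt a) - 1))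
    (h : ℝ → ℝ) (hsol : SolvesBVP a b h) :
    ∀ r ∈ Set.Icc (0 : ℝ) 1,
      |deriv h r| ≤ Real.sqrt (2 * besselI0 (Real.sqrt a) - 1)
        / (besselI0 (Real.sqrt a) - 1) := by
  set M := Real.sqrt (2 * besselI0 (Real.sqrt a) - 1) / (besselI0 (Real.sqrt a) - 1) with hM
  have hM_nonneg : 0 ≤ M := div_nonneg (Real.sqrt_nonneg _) (sub_nonneg.2 (one_le_besselI0 _))
  have hbM : b / 2 ≤ M := by
    rw [mul_div_assoc, ← hM] at hb
    linarith [mul_le_mul_of_nonneg_right (div_besselI1_le_two (Real.sqrt_nonneg a)) hM_nonneg]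
  have hg : ∀ r ∈ Ioc (0 : ℝ) 1, |derivWithin h (Icc 0 1) r| ≤ b * r / 2 := fun r hr =>
    abs_le_mul_of_abs_le_of_hasDerivAt_flux
      (hsol.1.continuousOn_derivWithin (uniqueDiffOn_Icc one_pos) (by norm_num))
      hsol.hasDerivAt_flux
      (fun t ht => hsol.abs_forcing_le ha hb0.le t (Ioo_subset_Icc_self ht)) hr
  intro r hr
  rcases hr.1.eq_or_lt with rfl | hr0
  · rwa [hsol.2.2.1, abs_zero]
  refine abs_deriv_le_of_abs_derivWithin_le (uniqueDiffOn_Icc one_pos r hr) hM_nonneg ?_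
  calc |derivWithin h (Icc 0 1) r| ≤ b * r / 2 := hg r ⟨hr0, hr.2⟩
    _ ≤ b / 2 := by nlinarith [hr.2]
    _ ≤ M := hbM
end

section
/- Let a > 0 and 0 < b ≤ (√a/I₁(√a))·√(2I₀(√a)-1)/(I₀(√a)-1). Then the solution h of the corneal boundary value problem satisfies (2 - 1/I₀(√a))·h₀'(r) ≤ h'(r) ≤ 0 for all r ∈ [0,1], where h₀(r) = (b/a)(1 - I₀(√a r)/I₀(√a)). In particular h is nonincreasing. -/
open Real MeasureTheory Set Filter Topology

/-!
Both `h` and `h₀ = picard a b 0` solve the radial equation `-(1/r)(r f')' + a f = q`, with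
sources `P = b/√(1 + h'²) ∈ [0, b]` and `b` respectively (`I₀' = I₁` and `(z I₁)' = z I₀` give the
equation for `h₀`). The maximum principle gives `0 ≤ h ≤ h₀`, and integrating the flux `r h'`
from `0` gives `|h'| ≤ b/2`. The hypothesis on `b` (through `I₁(√a) ≥ √a/2`) turns this into
`P ≥ (1 - 1/I₀(√a)) b`, whence `(1 - 1/I₀(√a)) h₀ ≤ h` by the maximum principle again.
Integrating the fluxes of `h₀ - h` and `h - (1 - 1/I₀(√a)) h₀`, and using
`h₀'(r) ≤ -b r / (2 I₀(√a))`, gives the two bounds on `(0, 1)`; they extend to `[0, 1]` by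
continuity of `h'` on the closed interval.
-/

open scoped Nat

noncomputable def besselI (ν : ℕ) (z : ℝ) : ℝ :=
  ∑' k : ℕ, (z / 2) ^ (2 * k + ν) / ((k ! : ℝ) * (k + ν)!)

theorem besselI0_eq_besselI_zero : besselI0 = besselI 0 := rfl

theorem besselI1_eq_besselI_one : besselI1 = besselI 1 := rfl

theorem abs_besselI_term_le (ν k : ℕ) {x R : ℝ} (hx : |x| ≤ R) :
    |(x / 2) ^ (2 * k + ν) / ((k ! : ℝ) * (k + ν)!)|
      ≤ (R / 2) ^ ν * (((R / 2) ^ 2) ^ k / k !) := by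
  have hR : |x / 2| ≤ R / 2 := by rw [abs_div, abs_two]; linarith
  rw [abs_div, abs_pow, abs_of_pos (show (0 : ℝ) < k ! * (k + ν)! by positivity)]
  calc |x / 2| ^ (2 * k + ν) / ((k ! : ℝ) * (k + ν)!) ≤ (R / 2) ^ (2 * k + ν) / (k ! * 1) :=
        div_le_div₀ (pow_nonneg ((abs_nonneg _).trans hR) _)
          (pow_le_pow_left₀ (abs_nonneg _) hR _) (by positivity)
          (mul_le_mul_of_nonneg_left (mod_cast (k + ν).factorial_pos) (by positivity))
    _ = (R / 2) ^ ν * (((R / 2) ^ 2) ^ k / k !) := by rw [pow_add, pow_mul]; ring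

theorem summable_besselI_majorant (ν : ℕ) (R : ℝ) :
    Summable fun k : ℕ => (R / 2) ^ ν * (((R / 2) ^ 2) ^ k / k !) :=
  (Real.summable_pow_div_factorial _).mul_left _

theorem summable_besselI (ν : ℕ) (z : ℝ) :
    Summable fun k : ℕ => (z / 2) ^ (2 * k + ν) / ((k ! : ℝ) * (k + ν)!) :=
  .of_norm_bounded (summable_besselI_majorant ν |z|) fun k => abs_besselI_term_le ν k le_rfl

theorem continuous_besselI (ν : ℕ) : Continuous (besselI ν) := by
  refine continuous_iff_continuousAt.2 fun z => ?_
  have hz : z ∈ Metric.ball (0 : ℝ) (|z| + 1) := by simp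
  refine (continuousOn_tsum (fun k => by fun_prop) (summable_besselI_majorant ν (|z| + 1))
    fun k x hx => abs_besselI_term_le ν k ?_).continuousAt (Metric.isOpen_ball.mem_nhds hz)
  exact (by simpa using hx : |x| < |z| + 1).le

theorem continuous_besselI1 : Continuous besselI1 := continuous_besselI 1

theorem sum_le_besselI (ν : ℕ) {z : ℝ} (hz : 0 ≤ z) (s : Finset ℕ) :
    ∑ k ∈ s, (z / 2) ^ (2 * k + ν) / ((k ! : ℝ) * (k + ν)!) ≤ besselI ν z :=
  (summable_besselI ν z).sum_le_tsum s fun k _ => by positivity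

theorem one_le_besselI0_s15 {z : ℝ} (hz : 0 ≤ z) : 1 ≤ besselI0 z := by
  rw [besselI0_eq_besselI_zero]
  simpa using sum_le_besselI 0 hz {0}

theorem besselI0_pos {z : ℝ} (hz : 0 ≤ z) : 0 < besselI0 z :=
  one_pos.trans_le (one_le_besselI0_s15 hz)

theorem one_lt_besselI0 {z : ℝ} (hz : 0 < z) : 1 < besselI0 z :=
  calc 1 < 1 + (z / 2) ^ 2 := lt_add_of_pos_right 1 (by positivity)
    _ = ∑ k ∈ Finset.range 2, (z / 2) ^ (2 * k + 0) / ((k ! : ℝ) * (k + 0)!) := by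
        simp [Finset.sum_range_succ]
    _ ≤ besselI0 z := sum_le_besselI 0 hz.le _

theorem div_two_le_besselI1 {z : ℝ} (hz : 0 ≤ z) : z / 2 ≤ besselI1 z := by
  rw [besselI1_eq_besselI_one]
  simpa using sum_le_besselI 1 hz {0}

theorem hasDerivAt_tsum_of_abs_le {g g' : ℕ → ℝ → ℝ} {M : ℝ → ℕ → ℝ}
    (hM : ∀ R, Summable (M R)) (hg : ∀ k x, HasDerivAt (g k) (g' k x) x)
    (hg' : ∀ R k x, |x| ≤ R → |g' k x| ≤ M R k) {z : ℝ} (hz : Summable fun k => g k z) :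
    HasDerivAt (fun x => ∑' k, g k x) (∑' k, g' k z) z := by
  have hball : z ∈ Metric.ball (0 : ℝ) (|z| + 1) := by simp
  refine hasDerivAt_tsum_of_isPreconnected (hM (|z| + 1)) Metric.isOpen_ball
    (convex_ball 0 _).isPreconnected (fun k x _ => hg k x) (fun k x hx => hg' _ k x ?_) hball hz
    hball
  exact (by simpa using hx : |x| < |z| + 1).le

theorem hasDerivAt_pow_mul_besselI_term (ν k : ℕ) (x : ℝ) :
    HasDerivAt
      (fun x : ℝ => x ^ (ν + 1) * ((x / 2) ^ (2 * k + (ν + 1)) / ((k ! : ℝ) * (k + (ν + 1))!)))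
      (x ^ (ν + 1) * ((x / 2) ^ (2 * k + ν) / ((k ! : ℝ) * (k + ν)!))) x := by
  refine ((hasDerivAt_pow (ν + 1) x).fun_mul
    ((((hasDerivAt_id x).div_const 2).fun_pow (2 * k + (ν + 1))).div_const
      ((k ! : ℝ) * (k + (ν + 1))!))).congr_deriv ?_
  rw [show k + (ν + 1) = (k + ν) + 1 by ring, Nat.factorial_succ]
  simp only [id, Nat.add_sub_cancel, show 2 * k + (ν + 1) - 1 = 2 * k + ν by omega]
  push_cast
  field_simp
  ring

theorem hasDerivAt_pow_mul_besselI (ν : ℕ) (z : ℝ) :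
    HasDerivAt (fun x => x ^ (ν + 1) * besselI (ν + 1) x) (z ^ (ν + 1) * besselI ν z) z := by
  have := hasDerivAt_tsum_of_abs_le
    (M := fun R k => R ^ (ν + 1) * ((R / 2) ^ ν * (((R / 2) ^ 2) ^ k / k !)))
    (fun R => (summable_besselI_majorant ν R).mul_left _) (hasDerivAt_pow_mul_besselI_term ν)
    (fun R k x hx => ?_) ((summable_besselI (ν + 1) z).mul_left (z ^ (ν + 1)))
  · simpa only [besselI, tsum_mul_left] using this
  · rw [abs_mul, abs_pow]
    exact mul_le_mul (pow_le_pow_left₀ (abs_nonneg x) hx _) (abs_besselI_term_le ν k hx)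
      (abs_nonneg _) (pow_nonneg ((abs_nonneg x).trans hx) _)

theorem hasDerivAt_mul_besselI1 (z : ℝ) :
    HasDerivAt (fun x => x * besselI1 x) (z * besselI0 z) z := by
  simpa [← besselI0_eq_besselI_zero, ← besselI1_eq_besselI_one]
    using hasDerivAt_pow_mul_besselI 0 z

theorem hasDerivAt_besselI0 (z : ℝ) : HasDerivAt besselI0 (besselI1 z) z := by
  have hs (x : ℝ) : Summable fun k : ℕ => (x / 2) ^ (2 * k) / ((k ! : ℝ) * k !) :=
    summable_besselI 0 x
  have hsplit : besselI0 =
      fun x => 1 + ∑' k : ℕ, (x / 2) ^ (2 * (k + 1)) / (((k + 1)! : ℝ) * (k + 1)!) := by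
    ext x
    rw [besselI0, (hs x).tsum_eq_zero_add]
    simp
  rw [hsplit]
  refine (hasDerivAt_tsum_of_abs_le (summable_besselI_majorant 1) (fun k x => ?_)
    (fun R k x hx => abs_besselI_term_le 1 k hx) ((summable_nat_add_iff 1).2 (hs z))).const_add 1
  refine (((hasDerivAt_id x).div_const 2).fun_pow (2 * (k + 1))).div_const
    ((((k + 1)! : ℝ) * (k + 1)!)) |>.congr_deriv ?_
  rw [Nat.factorial_succ]
  simp only [id, show 2 * (k + 1) - 1 = 2 * k + 1 by omega]
  push_cast
  field_simp

theorem nonneg_of_hasDerivAt_nonneg {u u' : ℝ → ℝ} {p q : ℝ}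
    (hu : ∀ r ∈ Ioo p q, HasDerivAt u (u' r) r) (hu' : ∀ r ∈ Ioo p q, 0 ≤ u' r)
    (hp : Tendsto u (𝓝[>] p) (𝓝 0)) : ∀ r ∈ Ioo p q, 0 ≤ u r := by
  have hmono : MonotoneOn u (Ioo p q) :=
    monotoneOn_of_hasDerivWithinAt_nonneg (convex_Ioo p q)
      (fun r hr => (hu r hr).continuousAt.continuousWithinAt)
      (fun r hr => (hu r (interior_subset hr)).hasDerivWithinAt)
      (fun r hr => hu' r (interior_subset hr))
  intro r hr
  refine le_of_tendsto hp ?_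
  filter_upwards [Ioo_mem_nhdsGT hr.1] with s hs
  exact hmono ⟨hs.1, hs.2.trans hr.2⟩ hr hs.2.le

theorem pos_of_hasDerivAt_pos {u u' : ℝ → ℝ} {p q : ℝ}
    (hu : ∀ r ∈ Ioo p q, HasDerivAt u (u' r) r) (hu' : ∀ r ∈ Ioo p q, 0 < u' r)
    (hp : Tendsto u (𝓝[>] p) (𝓝 0)) : ∀ r ∈ Ioo p q, 0 < u r := by
  have hmono : StrictMonoOn u (Ioo p q) :=
    strictMonoOn_of_hasDerivWithinAt_pos (convex_Ioo p q)
      (fun r hr => (hu r hr).continuousAt.continuousWithinAt)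
      (fun r hr => (hu r (interior_subset hr)).hasDerivWithinAt)
      (fun r hr => hu' r (interior_subset hr))
  intro r hr
  have hmid : (p + r) / 2 ∈ Ioo p q := ⟨by linarith [hr.1], by linarith [hr.1, hr.2]⟩
  calc 0 ≤ u ((p + r) / 2) :=
        nonneg_of_hasDerivAt_nonneg hu (fun s hs => (hu' s hs).le) hp _ hmid
    _ < u r := hmono hmid hr (by linarith [hr.1])

/-- `hLU` is needed because `deriv h` takes the junk value `0` at an endpoint where `h` is not
differentiable. -/
theorem ContDiffOn.deriv_mem_Icc_of_forall_Ioo {h L U : ℝ → ℝ} {p q : ℝ} (hpq : p < q)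
    (hh : ContDiffOn ℝ 1 h (Icc p q)) (hL : ContinuousOn L (Icc p q))
    (hU : ContinuousOn U (Icc p q)) (hLU : ∀ r ∈ Icc p q, (0 : ℝ) ∈ Icc (L r) (U r))
    (hIoo : ∀ r ∈ Ioo p q, deriv h r ∈ Icc (L r) (U r)) :
    ∀ r ∈ Icc p q, deriv h r ∈ Icc (L r) (U r) := by
  intro r hr
  have hw := hh.continuousOn_derivWithin (uniqueDiffOn_Icc hpq) le_rfl
  have hr' : r ∈ closure (Ioo p q) := by rwa [closure_Ioo hpq.ne]
  have heq (s) (hs : s ∈ Ioo p q) : derivWithin h (Icc p q) s = deriv h s :=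
    derivWithin_of_mem_nhds (Icc_mem_nhds hs.1 hs.2)
  have hwr : derivWithin h (Icc p q) r ∈ Icc (L r) (U r) :=
    ⟨((hL r hr).mono Ioo_subset_Icc_self).closure_le hr' ((hw r hr).mono Ioo_subset_Icc_self)
        fun s hs => heq s hs ▸ (hIoo s hs).1,
      ((hw r hr).mono Ioo_subset_Icc_self).closure_le hr' ((hU r hr).mono Ioo_subset_Icc_self)
        fun s hs => heq s hs ▸ (hIoo s hs).2⟩
  by_cases hd : DifferentiableAt ℝ h r
  · rwa [← hd.derivWithin (uniqueDiffOn_Icc hpq r hr)]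
  · rw [deriv_zero_of_not_differentiableAt hd]
    exact hLU r hr

theorem sqrt_one_add_sq_le {I x : ℝ} (hI : 1 < I) (hx : |x| ≤ √(2 * I - 1) / (I - 1)) :
    √(1 + x ^ 2) ≤ I / (I - 1) := by
  have hI1 : 0 < I - 1 := by linarith
  have hx2 : x ^ 2 ≤ (2 * I - 1) / (I - 1) ^ 2 :=
    calc x ^ 2 = |x| ^ 2 := (sq_abs x).symm
      _ ≤ (√(2 * I - 1) / (I - 1)) ^ 2 := pow_le_pow_left₀ (abs_nonneg x) hx 2
      _ = (2 * I - 1) / (I - 1) ^ 2 := by rw [div_pow, sq_sqrt (by linarith)]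
  refine Real.sqrt_le_iff.2 ⟨by positivity, ?_⟩
  calc 1 + x ^ 2 ≤ 1 + (2 * I - 1) / (I - 1) ^ 2 := by linarith
    _ = (I / (I - 1)) ^ 2 := by field_simp; ring

theorem div_sqrt_one_add_sq_le_self {b : ℝ} (hb : 0 ≤ b) (x : ℝ) : b / √(1 + x ^ 2) ≤ b :=
  div_le_self hb (one_le_sqrt.2 (le_add_of_nonneg_right (sq_nonneg x)))

/-- `f` solves `-(1/r) (r f')' + a f = q` on `(0, 1)`, where `f'` is the derivative of `f`, is
continuous on `[0, 1]`, and its flux `r f'` vanishes at the origin. -/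
structure IsRadialSolution (a : ℝ) (f f' q : ℝ → ℝ) : Prop where
  continuousOn : ContinuousOn f (Icc 0 1)
  hasDerivAt : ∀ r ∈ Ioo (0 : ℝ) 1, HasDerivAt f (f' r) r
  hasDerivAt_flux : ∀ r ∈ Ioo (0 : ℝ) 1, HasDerivAt (fun s => s * f' s) (r * (a * f r - q r)) r
  tendsto_flux : Tendsto (fun r => r * f' r) (𝓝[>] 0) (𝓝 0)

namespace IsRadialSolution

variable {a : ℝ} {f f' q g g' p : ℝ → ℝ}

theorem sub (hf : IsRadialSolution a f f' q) (hg : IsRadialSolution a g g' p) :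
    IsRadialSolution a (fun r => f r - g r) (fun r => f' r - g' r) (fun r => q r - p r) where
  continuousOn := hf.continuousOn.sub hg.continuousOn
  hasDerivAt r hr := (hf.hasDerivAt r hr).sub (hg.hasDerivAt r hr)
  hasDerivAt_flux r hr := by
    rw [show (fun s => s * (f' s - g' s)) = fun s => s * f' s - s * g' s by funext s; ring]
    exact ((hf.hasDerivAt_flux r hr).fun_sub (hg.hasDerivAt_flux r hr)).congr_deriv (by ring)
  tendsto_flux := by simpa [mul_sub] using hf.tendsto_flux.sub hg.tendsto_flux

theorem const_mul (hf : IsRadialSolution a f f' q) (c : ℝ) :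
    IsRadialSolution a (fun r => c * f r) (fun r => c * f' r) (fun r => c * q r) where
  continuousOn := hf.continuousOn.const_smul c
  hasDerivAt r hr := (hf.hasDerivAt r hr).const_mul c
  hasDerivAt_flux r hr := by
    rw [show (fun s => s * (c * f' s)) = fun s => c * (s * f' s) by funext s; ring]
    exact ((hf.hasDerivAt_flux r hr).const_mul c).congr_deriv (by ring)
  tendsto_flux := by simpa [mul_left_comm] using hf.tendsto_flux.const_mul c

/-- The maximum principle: at a negative minimum `m` of `f` the flux vanishes, and to the right of
`m` it decreases strictly, so `f` would decrease below its minimum. -/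
theorem nonneg (hf : IsRadialSolution a f f' q) (ha : 0 < a)
    (hq : ∀ r ∈ Ioo (0 : ℝ) 1, 0 ≤ q r) (h1 : 0 ≤ f 1) : ∀ r ∈ Icc (0 : ℝ) 1, 0 ≤ f r := by
  by_contra! hneg
  obtain ⟨r₁, hr₁, hfr₁⟩ := hneg
  obtain ⟨m, hm, hmin⟩ :=
    isCompact_Icc.exists_isMinOn (nonempty_Icc.2 zero_le_one) hf.continuousOn
  have hfm : f m < 0 := (hmin hr₁).trans_lt hfr₁
  have hm1 : m < 1 := hm.2.lt_of_ne (by rintro rfl; linarith)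
  have hflux : Tendsto (fun r => r * f' r) (𝓝[>] m) (𝓝 0) := by
    rcases hm.1.eq_or_lt with rfl | hm0
    · exact hf.tendsto_flux
    · have hm' : m ∈ Ioo (0 : ℝ) 1 := ⟨hm0, hm1⟩
      have hf'm : f' m = 0 :=
        (hmin.isLocalMin (Icc_mem_nhds hm0 hm1)).hasDerivAt_eq_zero (hf.hasDerivAt m hm')
      simpa [hf'm] using
        (hf.hasDerivAt_flux m hm').continuousAt.tendsto.mono_left nhdsWithin_le_nhds
  have hev : ∀ᶠ r in 𝓝[>] m, f r < 0 := by
    rw [← nhdsWithin_Ioo_eq_nhdsGT hm1]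
    have hcont : ContinuousWithinAt f (Ioo m 1) m :=
      (hf.continuousOn m hm).mono fun r hr => ⟨hm.1.trans hr.1.le, hr.2.le⟩
    exact hcont.eventually_lt_const hfm
  obtain ⟨δ, hmδ, hδ⟩ := mem_nhdsGT_iff_exists_Ioo_subset.1 hev
  set t := min δ 1
  have hmt : m < t := lt_min hmδ hm1
  have hIoo : ∀ r ∈ Ioo m t, f r < 0 ∧ r ∈ Ioo (0 : ℝ) 1 := fun r hr =>
    ⟨hδ ⟨hr.1, hr.2.trans_le (min_le_left _ _)⟩, hm.1.trans_lt hr.1,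
      hr.2.trans_le (min_le_right _ _)⟩
  have hflux_neg : ∀ r ∈ Ioo m t, r * f' r < 0 := by
    have := pos_of_hasDerivAt_pos (u := fun r => -(r * f' r))
      (fun r hr => (hf.hasDerivAt_flux r (hIoo r hr).2).neg) (fun r hr => ?_)
      (by simpa using hflux.neg)
    · exact fun r hr => neg_pos.1 (this r hr)
    · obtain ⟨hfr, hr01⟩ := hIoo r hr
      exact neg_pos.2 (mul_neg_of_pos_of_neg hr01.1
        (by linarith [mul_neg_of_pos_of_neg ha hfr, hq r hr01]))
  have hanti : StrictAntiOn f (Icc m t) := by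
    refine strictAntiOn_of_hasDerivWithinAt_neg (f' := f') (convex_Icc m t)
      (hf.continuousOn.mono (Icc_subset_Icc hm.1 (min_le_right _ _))) (fun r hr => ?_)
      (fun r hr => ?_)
    all_goals rw [interior_Icc] at hr
    · exact (hf.hasDerivAt r (hIoo r hr).2).hasDerivWithinAt
    · exact neg_of_mul_neg_right (hflux_neg r hr) (hIoo r hr).2.1.le
  exact (hmin ⟨hm.1.trans hmt.le, min_le_right _ _⟩).not_gt
    (hanti (left_mem_Icc.2 hmt.le) (right_mem_Icc.2 hmt.le) hmt)

theorem mul_div_two_le (hf : IsRadialSolution a f f' q) {c : ℝ}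
    (hc : ∀ r ∈ Ioo (0 : ℝ) 1, c ≤ a * f r - q r) : ∀ r ∈ Ioo (0 : ℝ) 1, c * r / 2 ≤ f' r := by
  have hpoly : Tendsto (fun r : ℝ => c * r ^ 2 / 2) (𝓝[>] 0) (𝓝 0) :=
    tendsto_nhdsWithin_of_tendsto_nhds
      (by simpa using ((continuous_pow 2).const_mul c).div_const 2 |>.tendsto 0)
  have key := nonneg_of_hasDerivAt_nonneg (u := fun r => r * f' r - c * r ^ 2 / 2)
    (u' := fun r => r * (a * f r - q r) - c * r)
    (fun r hr => (hf.hasDerivAt_flux r hr).sub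
      ((((hasDerivAt_pow 2 r).const_mul c).div_const 2).congr_deriv (by push_cast; ring)))
    (fun r hr => by nlinarith [mul_nonneg hr.1.le (sub_nonneg.2 (hc r hr))])
    (by simpa using hf.tendsto_flux.sub hpoly)
  intro r hr
  have : 0 ≤ r * (f' r - c * r / 2) := by linarith [key r hr]
  linarith [(mul_nonneg_iff_of_pos_left hr.1).1 this]

end IsRadialSolution

section Cornea

variable {a b : ℝ} {h : ℝ → ℝ}

theorem picard_zero_one (a b : ℝ) : picard a b 0 1 = 0 := by
  simp [picard, (besselI0_pos (sqrt_nonneg a)).ne']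

theorem hasDerivAt_picard_zero (ha : 0 < a) (b r : ℝ) :
    HasDerivAt (picard a b 0) (-(b / √a) * besselI1 (√a * r) / besselI0 √a) r := by
  refine ((((hasDerivAt_besselI0 (√a * r)).comp r ((hasDerivAt_id r).const_mul √a)).div_const
    (besselI0 √a)).const_sub 1).const_mul (b / a) |>.congr_deriv ?_
  have : √a ≠ 0 := (sqrt_pos.2 ha).ne'
  field_simp
  rw [sq_sqrt ha.le]

theorem deriv_picard_zero (ha : 0 < a) (b : ℝ) :
    deriv (picard a b 0) = fun r => -(b / √a) * besselI1 (√a * r) / besselI0 √a :=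
  funext fun r => (hasDerivAt_picard_zero ha b r).deriv

theorem hasDerivAt_mul_deriv_picard_zero (ha : 0 < a) (b r : ℝ) :
    HasDerivAt (fun s => s * deriv (picard a b 0) s) (r * (a * picard a b 0 r - b)) r := by
  have hsa : √a ≠ 0 := (sqrt_pos.2 ha).ne'
  have hI0 : besselI0 √a ≠ 0 := (besselI0_pos (sqrt_nonneg a)).ne'
  have hflux : (fun s => s * deriv (picard a b 0) s)
      = fun s => -(b / a) / besselI0 √a * ((√a * s) * besselI1 (√a * s)) := by
    rw [deriv_picard_zero ha b]
    funext s
    field_simp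
    rw [sq_sqrt ha.le]
    ring
  rw [hflux]
  refine (((hasDerivAt_mul_besselI1 (√a * r)).comp r ((hasDerivAt_id r).const_mul √a)).const_mul
    (-(b / a) / besselI0 √a)).congr_deriv ?_
  simp only [picard]
  field_simp
  rw [sq_sqrt ha.le]
  ring

theorem isRadialSolution_picard_zero (ha : 0 < a) (b : ℝ) :
    IsRadialSolution a (picard a b 0) (deriv (picard a b 0)) fun _ => b where
  continuousOn := Continuous.continuousOn <|
    Differentiable.continuous fun r => (hasDerivAt_picard_zero ha b r).differentiableAt
  hasDerivAt r _ := (hasDerivAt_picard_zero ha b r).differentiableAt.hasDerivAt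
  hasDerivAt_flux r _ := hasDerivAt_mul_deriv_picard_zero ha b r
  tendsto_flux := by
    simpa using (hasDerivAt_mul_deriv_picard_zero ha b 0).continuousAt.tendsto.mono_left
      nhdsWithin_le_nhds

theorem continuous_deriv_picard_zero (ha : 0 < a) (b : ℝ) :
    Continuous (deriv (picard a b 0)) := by
  rw [deriv_picard_zero ha b]
  exact (continuous_const.mul
    (continuous_besselI1.comp (continuous_const.mul continuous_id))).div_const _

theorem deriv_picard_zero_le (ha : 0 < a) (hb : 0 ≤ b) {r : ℝ} (hr : 0 ≤ r) :
    deriv (picard a b 0) r ≤ -((besselI0 √a)⁻¹ * b) * r / 2 := by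
  have hsa : 0 < √a := sqrt_pos.2 ha
  have hI1 : b / √a * (√a * r / 2) ≤ b / √a * besselI1 (√a * r) :=
    mul_le_mul_of_nonneg_left (div_two_le_besselI1 (by positivity)) (by positivity)
  have hI0 : 0 ≤ (besselI0 √a)⁻¹ := inv_nonneg.2 (besselI0_pos hsa.le).le
  rw [deriv_picard_zero ha b]
  calc -(b / √a) * besselI1 (√a * r) / besselI0 √a
      = -(b / √a * besselI1 (√a * r)) * (besselI0 √a)⁻¹ := by ring
    _ ≤ -(b / √a * (√a * r / 2)) * (besselI0 √a)⁻¹ :=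
        mul_le_mul_of_nonneg_right (neg_le_neg hI1) hI0
    _ = -((besselI0 √a)⁻¹ * b) * r / 2 := by field_simp

theorem deriv_picard_zero_nonpos (ha : 0 < a) (hb : 0 ≤ b) {r : ℝ} (hr : 0 ≤ r) :
    deriv (picard a b 0) r ≤ 0 := by
  have : 0 ≤ (besselI0 √a)⁻¹ * b * r :=
    mul_nonneg (mul_nonneg (inv_nonneg.2 (besselI0_pos (sqrt_nonneg a)).le) hb) hr
  linarith [deriv_picard_zero_le ha hb hr]

theorem SolvesBVP.isRadialSolution (hsol : SolvesBVP a b h) :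
    IsRadialSolution a h (deriv h) fun r => b / √(1 + deriv h r ^ 2) := by
  obtain ⟨hC2, hode, -, -⟩ := hsol
  have hC1 : ContDiffOn ℝ 1 (deriv h) (Ioo 0 1) :=
    (hC2.mono Ioo_subset_Icc_self).deriv_of_isOpen isOpen_Ioo (by norm_num)
  refine ⟨hC2.continuousOn, fun r hr => ?_, fun r hr => ?_, ?_⟩
  · exact ((hC2.contDiffAt (Icc_mem_nhds hr.1 hr.2)).differentiableAt (by norm_num)).hasDerivAt
  · have hd : DifferentiableAt ℝ (fun s => s * deriv h s) r := differentiableAt_id.mul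
      ((hC1.differentiableOn one_ne_zero r hr).differentiableAt (isOpen_Ioo.mem_nhds hr))
    refine hd.hasDerivAt.congr_deriv ?_
    have hr0 : r ≠ 0 := hr.1.ne'
    rw [← hode r hr]
    field_simp
    ring
  · have hw := hC2.continuousOn_derivWithin (uniqueDiffOn_Icc zero_lt_one) (by norm_num)
    have hlim : Tendsto (fun r => r * derivWithin h (Icc 0 1) r) (𝓝[Ioo 0 1] 0) (𝓝 0) := by
      simpa using ((continuousOn_id.fun_mul hw) 0 (left_mem_Icc.2 zero_le_one)).mono_left
        (nhdsWithin_mono _ Ioo_subset_Icc_self)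
    rw [nhdsWithin_Ioo_eq_nhdsGT zero_lt_one] at hlim
    refine hlim.congr' ?_
    filter_upwards [Ioo_mem_nhdsGT zero_lt_one] with r hr
    rw [derivWithin_of_mem_nhds (Icc_mem_nhds hr.1 hr.2)]

theorem SolvesBVP.nonneg (hsol : SolvesBVP a b h) (ha : 0 < a) (hb : 0 ≤ b) :
    ∀ r ∈ Icc (0 : ℝ) 1, 0 ≤ h r :=
  hsol.isRadialSolution.nonneg ha (fun r _ => by positivity) hsol.2.2.2.ge

theorem SolvesBVP.le_picard_zero (hsol : SolvesBVP a b h) (ha : 0 < a) (hb : 0 ≤ b) :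
    ∀ r ∈ Icc (0 : ℝ) 1, h r ≤ picard a b 0 r := by
  have := ((isRadialSolution_picard_zero ha b).sub hsol.isRadialSolution).nonneg ha
    (fun r _ => sub_nonneg.2 (div_sqrt_one_add_sq_le_self hb _))
    (by simp [picard_zero_one, hsol.2.2.2])
  exact fun r hr => sub_nonneg.1 (this r hr)

theorem SolvesBVP.abs_deriv_le (hsol : SolvesBVP a b h) (ha : 0 < a) (hb : 0 ≤ b) :
    ∀ r ∈ Ioo (0 : ℝ) 1, |deriv h r| ≤ b / 2 := by
  have hlower := hsol.isRadialSolution.mul_div_two_le (c := -b) fun r hr => by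
    have := mul_nonneg ha.le (hsol.nonneg ha hb r (Ioo_subset_Icc_self hr))
    linarith [div_sqrt_one_add_sq_le_self hb (deriv h r)]
  have hupper := ((isRadialSolution_picard_zero ha b).sub hsol.isRadialSolution).mul_div_two_le
    (c := -b) fun r hr => by
      have := hsol.le_picard_zero ha hb r (Ioo_subset_Icc_self hr)
      have := mul_nonneg ha.le (sub_nonneg.2 this)
      have : 0 ≤ b / √(1 + deriv h r ^ 2) := by positivity
      linarith
  intro r hr
  have h₀' := deriv_picard_zero_nonpos ha hb hr.1.le
  have hbr : b * r ≤ b := mul_le_of_le_one_right hb hr.2.le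
  exact abs_le.2 ⟨by linarith [hlower r hr], by linarith [hupper r hr]⟩

theorem SolvesBVP.sub_inv_mul_le_source (hsol : SolvesBVP a b h) (ha : 0 < a) (hb0 : 0 ≤ b)
    (hb : b ≤ (√a / besselI1 √a) * √(2 * besselI0 √a - 1) / (besselI0 √a - 1)) :
    ∀ r ∈ Ioo (0 : ℝ) 1, b - (besselI0 √a)⁻¹ * b ≤ b / √(1 + deriv h r ^ 2) := by
  intro r hr
  have hsa : 0 < √a := sqrt_pos.2 ha
  have hI : 1 < besselI0 √a := one_lt_besselI0 hsa
  have hI1 : √a / 2 ≤ besselI1 √a := div_two_le_besselI1 hsa.le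
  have hK : b / 2 ≤ √(2 * besselI0 √a - 1) / (besselI0 √a - 1) := by
    have : √a / besselI1 √a ≤ 2 := (div_le_iff₀ (by linarith)).2 (by linarith)
    have : b ≤ 2 * √(2 * besselI0 √a - 1) / (besselI0 √a - 1) :=
      hb.trans (div_le_div_of_nonneg_right (mul_le_mul_of_nonneg_right this (sqrt_nonneg _))
        (by linarith))
    rw [mul_div_assoc] at this
    linarith
  have hsq := sqrt_one_add_sq_le hI ((hsol.abs_deriv_le ha hb0 r hr).trans hK)
  calc b - (besselI0 √a)⁻¹ * b = b / (besselI0 √a / (besselI0 √a - 1)) := by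
        have : besselI0 √a - 1 ≠ 0 := by linarith
        field_simp
    _ ≤ b / √(1 + deriv h r ^ 2) :=
        div_le_div_of_nonneg_left hb0 (sqrt_pos.2 (by positivity)) hsq

theorem SolvesBVP.mul_picard_zero_le (hsol : SolvesBVP a b h) (ha : 0 < a) (hb0 : 0 ≤ b)
    (hb : b ≤ (√a / besselI1 √a) * √(2 * besselI0 √a - 1) / (besselI0 √a - 1)) :
    ∀ r ∈ Icc (0 : ℝ) 1, (1 - (besselI0 √a)⁻¹) * picard a b 0 r ≤ h r := by
  have := (hsol.isRadialSolution.sub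
    ((isRadialSolution_picard_zero ha b).const_mul (1 - (besselI0 √a)⁻¹))).nonneg ha
    (fun r hr => by linarith [hsol.sub_inv_mul_le_source ha hb0 hb r hr])
    (by simp [picard_zero_one, hsol.2.2.2])
  exact fun r hr => sub_nonneg.1 (this r hr)

theorem SolvesBVP.deriv_mem_Icc_of_mem_Ioo (hsol : SolvesBVP a b h) (ha : 0 < a) (hb0 : 0 ≤ b)
    (hb : b ≤ (√a / besselI1 √a) * √(2 * besselI0 √a - 1) / (besselI0 √a - 1)) :
    ∀ r ∈ Ioo (0 : ℝ) 1,
      deriv h r ∈ Icc ((2 - (besselI0 √a)⁻¹) * deriv (picard a b 0) r) 0 := by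
  have hs := hsol.isRadialSolution
  have h₀ := isRadialSolution_picard_zero ha b
  have hsource := hsol.sub_inv_mul_le_source ha hb0 hb
  have hupper := (h₀.sub hs).mul_div_two_le (c := -((besselI0 √a)⁻¹ * b)) fun r hr => by
    have := hsol.le_picard_zero ha hb0 r (Ioo_subset_Icc_self hr)
    have := mul_nonneg ha.le (sub_nonneg.2 this)
    linarith [hsource r hr]
  have hlower := (hs.sub (h₀.const_mul (1 - (besselI0 √a)⁻¹))).mul_div_two_le
    (c := -((besselI0 √a)⁻¹ * b)) fun r hr => by
      have := mul_nonneg ha.le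
        (sub_nonneg.2 (hsol.mul_picard_zero_le ha hb0 hb r (Ioo_subset_Icc_self hr)))
      linarith [div_sqrt_one_add_sq_le_self hb0 (deriv h r)]
  intro r hr
  have h₀' := deriv_picard_zero_le ha hb0 hr.1.le
  exact ⟨by linarith [hlower r hr], by linarith [hupper r hr]⟩

theorem SolvesBVP.deriv_mem_Icc (hsol : SolvesBVP a b h) (ha : 0 < a) (hb0 : 0 ≤ b)
    (hb : b ≤ (√a / besselI1 √a) * √(2 * besselI0 √a - 1) / (besselI0 √a - 1)) :
    ∀ r ∈ Icc (0 : ℝ) 1,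
      deriv h r ∈ Icc ((2 - (besselI0 √a)⁻¹) * deriv (picard a b 0) r) 0 := by
  have hfactor : 0 ≤ 2 - (besselI0 √a)⁻¹ := by
    linarith [inv_le_one_of_one_le₀ (one_le_besselI0_s15 (sqrt_nonneg a))]
  refine (hsol.1.of_le (by norm_num)).deriv_mem_Icc_of_forall_Ioo zero_lt_one
    (continuous_const.mul (continuous_deriv_picard_zero ha b)).continuousOn continuousOn_const
    (fun r hr => ⟨mul_nonpos_of_nonneg_of_nonpos hfactor (deriv_picard_zero_nonpos ha hb0 hr.1),
      le_rfl⟩) (hsol.deriv_mem_Icc_of_mem_Ioo ha hb0 hb)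

end Cornea

theorem solution_deriv_estimates (a b : ℝ) (ha : 0 < a) (hb0 : 0 < b)
    (hb : b ≤ (Real.sqrt a / besselI1 (Real.sqrt a))
      * Real.sqrt (2 * besselI0 (Real.sqrt a) - 1) / (besselI0 (Real.sqrt a) - 1))
    (h : ℝ → ℝ) (hsol : SolvesBVP a b h) :
    (∀ r ∈ Set.Icc (0 : ℝ) 1,
      (2 - 1 / besselI0 (Real.sqrt a))
          * (-(b / Real.sqrt a) * besselI1 (Real.sqrt a * r) / besselI0 (Real.sqrt a))
        ≤ deriv h r ∧ deriv h r ≤ 0) ∧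
    AntitoneOn h (Set.Icc (0 : ℝ) 1) := by
  have hderiv := hsol.deriv_mem_Icc ha hb0.le hb
  rw [deriv_picard_zero ha b] at hderiv
  refine ⟨fun r hr => one_div (besselI0 √a) ▸ hderiv r hr, ?_⟩
  exact antitoneOn_of_deriv_nonpos (convex_Icc 0 1) hsol.1.continuousOn
    ((hsol.1.differentiableOn (by norm_num)).mono interior_subset)
    fun r hr => (hderiv r (interior_subset hr)).2
end

section
/- For every H, ρ₀ > 0 with H·ρ₀ < 1, the equation (1/2)·H·ρ₀·a - I₀(√a) + 1 = 0 has a unique solution a > 0. -/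
open Real MeasureTheory Set Filter Topology

noncomputable def Sterm (k : ℕ) (a : ℝ) : ℝ :=
  a ^ k / (4 ^ (k + 1) * ((Nat.factorial (k + 1) : ℝ)) ^ 2)

noncomputable def Sfun (a : ℝ) : ℝ := ∑' k : ℕ, Sterm k a

lemma fact_sq_pos (k : ℕ) : (0:ℝ) < 4 ^ (k + 1) * ((Nat.factorial (k + 1) : ℝ)) ^ 2 := by
  positivity

lemma summable_Sfun (a : ℝ) : Summable (fun k : ℕ => Sterm k a) := by
  apply Summable.of_norm
  have h := Real.summable_pow_div_factorial |a|
  apply h.of_nonneg_of_le (fun k => norm_nonneg _)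
  intro k
  rw [Sterm, norm_div, norm_pow, Real.norm_eq_abs,
    Real.norm_of_nonneg (fact_sq_pos k).le]
  apply div_le_div_of_nonneg_left (by positivity) (by positivity)
  have h2 : (1:ℝ) ≤ (Nat.factorial (k+1) : ℝ) :=
    mod_cast Nat.one_le_iff_ne_zero.mpr (Nat.factorial_ne_zero _)
  have h3 : (Nat.factorial k : ℝ) ≤ (Nat.factorial (k+1) : ℝ) :=
    mod_cast Nat.factorial_le (Nat.le_succ k)
  have h4 : (1:ℝ) ≤ 4 ^ (k+1) := one_le_pow₀ (by norm_num)
  nlinarith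

lemma summable_I0core (x : ℝ) :
    Summable (fun k : ℕ => x ^ k / ((Nat.factorial k : ℝ) * Nat.factorial k)) := by
  apply Summable.of_norm
  have h := Real.summable_pow_div_factorial |x|
  apply h.of_nonneg_of_le (fun k => norm_nonneg _)
  intro k
  have h1 : (0:ℝ) < (Nat.factorial k : ℝ) * Nat.factorial k := by positivity
  rw [norm_div, norm_pow, Real.norm_eq_abs, Real.norm_of_nonneg h1.le]
  apply div_le_div_of_nonneg_left (by positivity) (by positivity)
  have h2 : (1:ℝ) ≤ (Nat.factorial k : ℝ) :=
    mod_cast Nat.one_le_iff_ne_zero.mpr (Nat.factorial_ne_zero _)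
  nlinarith

lemma besselI0_sqrt (a : ℝ) (ha : 0 ≤ a) : besselI0 (Real.sqrt a) = 1 + a * Sfun a := by
  have h1 : ∀ k : ℕ, (Real.sqrt a / 2) ^ (2 * k) / ((Nat.factorial k : ℝ) * Nat.factorial k)
      = (a / 4) ^ k / ((Nat.factorial k : ℝ) * Nat.factorial k) := by
    intro k
    congr 1
    rw [pow_mul, div_pow, Real.sq_sqrt ha]
    norm_num
  rw [besselI0]
  simp_rw [h1]
  rw [Summable.tsum_eq_zero_add (summable_I0core (a / 4))]
  have h2 : ∀ k : ℕ, (a / 4) ^ (k + 1) / ((Nat.factorial (k+1) : ℝ) * Nat.factorial (k+1))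
      = a * Sterm k a := by
    intro k
    rw [Sterm, div_pow, pow_succ a]
    field_simp
  simp_rw [h2]
  rw [tsum_mul_left]
  simp [Sfun]

lemma Sfun_strictMonoOn {a b : ℝ} (ha : 0 ≤ a) (hab : a < b) : Sfun a < Sfun b := by
  have hb : 0 ≤ b := le_trans ha hab.le
  refine Summable.tsum_lt_tsum (i := 1) (f := fun k => Sterm k a) (g := fun k => Sterm k b)
    ?_ ?_ (summable_Sfun a) (summable_Sfun b)
  · intro k
    simp only [Sterm]
    gcongr
  · simp only [Sterm, pow_one]
    apply div_lt_div_of_pos_right hab (fact_sq_pos 1)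

lemma Sfun_zero : Sfun 0 = 1 / 4 := by
  rw [Sfun, tsum_eq_single 0]
  · simp [Sterm]
  · intro k hk
    rw [Sterm, zero_pow hk]
    simp

lemma Sfun_continuousOn : ContinuousOn Sfun (Icc (0:ℝ) 64) := by
  apply continuousOn_tsum (u := fun k => Sterm k 64)
  · intro k
    exact (Continuous.div_const (continuous_pow k) _).continuousOn
  · exact summable_Sfun 64
  · intro k x hx
    rw [Sterm, norm_div, norm_pow, Real.norm_eq_abs,
      Real.norm_of_nonneg (fact_sq_pos k).le, Sterm]
    gcongr
    rw [abs_le]; exact ⟨by linarith [hx.1], hx.2⟩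

theorem unique_parameter_a (H ρ₀ : ℝ) (hH : 0 < H) (hρ₀ : 0 < ρ₀)
    (hlow : 1 / 2 < H * ρ₀) (hup : H * ρ₀ < 1) :
    ∃! a : ℝ, 0 < a ∧
      (1 / 2) * H * ρ₀ * a - besselI0 (Real.sqrt a) + 1 = 0 := by
  set c : ℝ := (1 / 2) * H * ρ₀ with hc
  have hc14 : 1 / 4 < c := by rw [hc]; linarith
  have hc12 : c < 1 / 2 := by rw [hc]; linarith
  -- equation characterization
  have key : ∀ a : ℝ, 0 < a →
      ((c * a - besselI0 (Real.sqrt a) + 1 = 0) ↔ Sfun a = c) := by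
    intro a ha
    rw [besselI0_sqrt a ha.le]
    constructor
    · intro h
      have : a * Sfun a = a * c := by linarith
      exact mul_left_cancel₀ ha.ne' this
    · intro h; rw [h]; ring
  -- existence
  have hS64 : 1 ≤ Sfun 64 := by
    have h1 : Sterm 1 64 ≤ Sfun 64 := by
      apply Summable.le_tsum (summable_Sfun 64) 1
      intro j _
      rw [Sterm]; positivity
    have : Sterm 1 64 = 1 := by norm_num [Sterm, Nat.factorial]
    linarith
  have hmem : c ∈ Icc (Sfun 0) (Sfun 64) := by
    rw [Sfun_zero]
    exact ⟨hc14.le, by linarith⟩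
  obtain ⟨a, haI, hSa⟩ := intermediate_value_Icc (by norm_num : (0:ℝ) ≤ 64)
    Sfun_continuousOn hmem
  have hapos : 0 < a := by
    rcases lt_or_eq_of_le haI.1 with h | h
    · exact h
    · exfalso; rw [← h] at hSa; rw [Sfun_zero] at hSa; linarith
  refine ⟨a, ⟨hapos, (key a hapos).mpr hSa⟩, ?_⟩
  rintro b ⟨hbpos, hb⟩
  have hSb : Sfun b = c := (key b hbpos).mp hb
  by_contra hne
  rcases lt_or_gt_of_ne hne with h | h
  · have := Sfun_strictMonoOn hbpos.le h
    rw [hSa, hSb] at this; exact lt_irrefl c this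
  · have := Sfun_strictMonoOn hapos.le h
    rw [hSa, hSb] at this; exact lt_irrefl c this
end
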